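/- arXiv:1502.05340 — 8 statements merged into one kernel-verified Lean document; each statement's English description precedes it below -/
import Mathlib

section
/- Every factorial poset is an interval order, i.e. contains no induced subposet isomorphic to the disjoint union of two 2-element chains (is (2+2)-free). -/
/-- Incomparability for a strict order. -/
def Incomp {n : ℕ} (lt : Fin n → Fin n → Prop) (x y : Fin n) : Prop :=
  ¬ lt x y ∧ ¬ lt y x ∧ x ≠ y

/-- Every factorial poset is (2+2)-free, i.e. an interval order: there are no
`a <_P b` and `c <_P d` with each of `a, b` incomparable to each of `c, d`. -/
theorem factorial_poset_is_two_plus_two_free (n : ℕ) (lt : Fin n → Fin n → Prop)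
    (hirr : ∀ i, ¬ lt i i)
    (htrans : ∀ i j k, lt i j → lt j k → lt i k)
    (hnat : ∀ i j, lt i j → i < j)
    (hfact : ∀ i j k : Fin n, i < j → lt j k → lt i k) :
    ¬ ∃ a b c d : Fin n, lt a b ∧ lt c d ∧
      Incomp lt a c ∧ Incomp lt a d ∧ Incomp lt b c ∧ Incomp lt b d := by
  rintro ⟨a, b, c, d, hab, hcd, ⟨hac, hca, hacne⟩, ⟨had, hda, _⟩, ⟨hbc, hcb, _⟩, _⟩
  rcases lt_trichotomy a c with h | h | h
  · exact had (hfact a c d h hcd)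
  · exact hacne h
  · exact hcb (hfact c a b h hab)
end

section
/- The number of factorial posets on [n] is n!; more precisely, factorial posets on [n] are in bijection with sequences (b_1, ..., b_n) with b_k \in [0, k-1] (inversion tables), via b_k = |{x : x <_P k}|. -/
/-!
The factorial condition says that the down-set `{x | x <_P k}` is a lower set of `[n]` for
the usual order, and it misses `k`, so it is the initial segment `{x | x < b_k}` with
`b_k = |{x | x <_P k}| ≤ k`. Hence `P` is determined by its table `b`, and conversely every
inversion table `b` defines the factorial poset `x <_P k ↔ x < b_k`. Counting inversion
tables gives `∏ k, (k + 1) = n!`.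
-/

/-- A factorial poset on `[n]` (modelled on `Fin n`): a naturally labeled strict
partial order satisfying the factorial condition. -/
structure FactorialPoset (n : ℕ) where
  lt : Fin n → Fin n → Prop
  irrefl : ∀ i, ¬ lt i i
  trans : ∀ i j k, lt i j → lt j k → lt i k
  natural : ∀ i j, lt i j → i < j
  factorial : ∀ i j k : Fin n, i < j → lt j k → lt i k

namespace FactorialPoset

variable {n : ℕ}

theorem ext {P Q : FactorialPoset n} (h : ∀ x k, P.lt x k ↔ Q.lt x k) : P = Q := by
  cases P; cases Q
  congr
  ext x k
  exact h x k

/-- The entry `b_k = |{x | x <_P k}|` of the inversion table of `P`. -/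
noncomputable def preCard (P : FactorialPoset n) (k : Fin n) : ℕ :=
  Nat.card {x : Fin n // P.lt x k}

theorem isLowerSet_setOf_lt (P : FactorialPoset n) (k : Fin n) :
    IsLowerSet {x | P.lt x k} := by
  intro x y hyx hx
  rcases hyx.lt_or_eq with hyx | rfl
  · exact P.factorial y x k hyx hx
  · exact hx

theorem exists_setOf_lt_eq_Iio (P : FactorialPoset n) (k : Fin n) :
    ∃ a : Fin n, {x | P.lt x k} = Set.Iio a := by
  refine (P.isLowerSet_setOf_lt k).eq_univ_or_Iio.resolve_left fun huniv => P.irrefl k ?_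
  exact Set.eq_univ_iff_forall.1 huniv k

theorem lt_iff_lt_preCard (P : FactorialPoset n) (x k : Fin n) :
    P.lt x k ↔ (x : ℕ) < P.preCard k := by
  obtain ⟨a, ha⟩ := P.exists_setOf_lt_eq_Iio k
  have hcard : P.preCard k = a := by
    rw [preCard, ← Set.coe_ofPred, ha]
    simp
  rw [hcard, ← Fin.lt_def, ← Set.mem_Iio, ← ha]
  rfl

theorem preCard_le (P : FactorialPoset n) (k : Fin n) : P.preCard k ≤ k :=
  not_lt.1 fun h => P.irrefl k ((P.lt_iff_lt_preCard k k).2 h)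

theorem eq_of_preCard_eq {P Q : FactorialPoset n} (h : ∀ k, P.preCard k = Q.preCard k) :
    P = Q :=
  ext fun x k => by rw [lt_iff_lt_preCard, lt_iff_lt_preCard, h]

def ofInversionTable (b : Fin n → ℕ) (hb : ∀ k : Fin n, b k ≤ k) : FactorialPoset n where
  lt x k := (x : ℕ) < b k
  irrefl x h := (h.trans_le (hb x)).false
  trans _ j _ hij hjk := (hij.trans_le (hb j)).trans hjk
  natural _ j h := Fin.lt_def.2 (h.trans_le (hb j))
  factorial _ _ _ hij hjk := (Fin.lt_def.1 hij).trans hjk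

theorem preCard_ofInversionTable (b : Fin n → ℕ) (hb : ∀ k : Fin n, b k ≤ k) (k : Fin n) :
    (ofInversionTable b hb).preCard k = b k := by
  change Nat.card {x : Fin n // (x : ℕ) < b k} = b k
  rw [Nat.card_eq_fintype_card, Fintype.card_subtype]
  exact Fin.card_filter_val_lt.trans (min_eq_right ((hb k).trans k.is_lt.le))

theorem existsUnique_preCard_eq (b : Fin n → ℕ) (hb : ∀ k : Fin n, b k ≤ k) :
    ∃! P : FactorialPoset n, ∀ k, P.preCard k = b k :=
  ⟨ofInversionTable b hb, preCard_ofInversionTable b hb, fun _ hP =>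
    eq_of_preCard_eq fun k => (hP k).trans (preCard_ofInversionTable b hb k).symm⟩

noncomputable def equivInversionTable : FactorialPoset n ≃ ∀ k : Fin n, Fin (k + 1) where
  toFun P k := ⟨P.preCard k, Nat.lt_succ_of_le (P.preCard_le k)⟩
  invFun b := ofInversionTable (fun k => b k) fun k => Fin.is_le (b k)
  left_inv _ := eq_of_preCard_eq (preCard_ofInversionTable _ _)
  right_inv _ := funext fun k => Fin.ext (preCard_ofInversionTable _ _ k)

theorem card_eq_factorial : Nat.card (FactorialPoset n) = n.factorial := by
  rw [Nat.card_congr equivInversionTable, Nat.card_eq_fintype_card, Fintype.card_pi]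
  simp only [Fintype.card_fin]
  rw [Fin.prod_univ_eq_prod_range (· + 1), Finset.prod_range_add_one_eq_factorial]

end FactorialPoset

/-- Factorial posets on `[n]` are in bijection with inversion tables
`(b_1, …, b_n)`, `b_k ∈ [0, k-1]`, via `b_k = |Pre(k)|`; in particular there are
`n!` of them. -/
theorem factorialPoset_card_and_bijection (n : ℕ) :
    (∀ b : Fin n → ℕ, (∀ k : Fin n, b k ≤ (k : ℕ)) →
      ∃! P : FactorialPoset n, ∀ k : Fin n, Nat.card {x : Fin n // P.lt x k} = b k) ∧
    Nat.card (FactorialPoset n) = n.factorial :=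
  ⟨FactorialPoset.existsUnique_preCard_eq, FactorialPoset.card_eq_factorial⟩
end

section
/- In a factorial poset P on [n], the down-sets are totally ordered by inclusion: for any j, k \in [n], either Pre(j) \subseteq Pre(k) or Pre(k) \subseteq Pre(j). -/
/-- In a factorial poset on `[n]`, the strict down-sets are totally ordered by
inclusion. -/
theorem factorial_downsets_chain (n : ℕ) (lt : Fin n → Fin n → Prop)
    (hirr : ∀ i, ¬ lt i i)
    (htrans : ∀ i j k, lt i j → lt j k → lt i k)
    (hnat : ∀ i j, lt i j → i < j)
    (hfact : ∀ i j k : Fin n, i < j → lt j k → lt i k) :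
    ∀ j k : Fin n, {x : Fin n | lt x j} ⊆ {x : Fin n | lt x k} ∨
      {x : Fin n | lt x k} ⊆ {x : Fin n | lt x j} := by
  intro j k
  by_contra h
  push_neg at h
  obtain ⟨h1, h2⟩ := h
  obtain ⟨x, hxj, hxk⟩ := Set.not_subset.mp h1
  obtain ⟨y, hyk, hyj⟩ := Set.not_subset.mp h2
  rcases lt_trichotomy x y with hxy | rfl | hyx
  · exact hxk (hfact x y k hxy hyk)
  · exact hxk hyk
  · exact hyj (hfact y x j hyx hxj)
end

section
/- In a factorial poset P on [n], |Pre(i)| > |Pre(i+1)| holds if and only if there exist elements forming an induced (2+1) subposet with \ell <_P i, \ell not <_P (i+1), and i, i+1 incomparable. -/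
/-!
The factorial condition makes every strict down-set `Pre(k)` an initial segment of `[n]`, so
`Pre(k) = {x | x < |Pre(k)|}`. Writing `a = |Pre(i)|` and `b = |Pre(i+1)|`, we have `a ≤ i`
since `i ∉ Pre(i)`. If `b < a`, the element `ℓ = b` lies in `Pre(i) \ Pre(i+1)` and below `i`,
which forces the (2+1); conversely any `ℓ ∈ Pre(i) \ Pre(i+1)` satisfies `b ≤ ℓ < a`.
-/

theorem Fin.mem_iff_lt_natCard_of_isLowerSet {n : ℕ} {s : Set (Fin n)} (hs : IsLowerSet s)
    (x : Fin n) : x ∈ s ↔ (x : ℕ) < Nat.card s := by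
  constructor
  · intro hx
    have hle : Nat.card (Set.Iic x) ≤ Nat.card s :=
      Nat.card_mono (Set.toFinite s) (hs.Iic_subset hx)
    rw [Nat.card_eq_card_toFinset, Set.toFinset_Iic, Fin.card_Iic] at hle
    omega
  · intro hx
    by_contra hxs
    have hsub : s ⊆ Set.Iio x := fun y hy => lt_of_not_ge fun hxy => hxs (hs hxy hy)
    have hle : Nat.card s ≤ Nat.card (Set.Iio x) := Nat.card_mono (Set.toFinite _) hsub
    rw [Nat.card_eq_card_toFinset (Set.Iio x), Set.toFinset_Iio, Fin.card_Iio] at hle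
    omega

theorem isLowerSet_setOf_rel_of_lt_rel {α : Type*} [PartialOrder α] {r : α → α → Prop}
    (hr : ∀ i j k, i < j → r j k → r i k) (k : α) : IsLowerSet {x | r x k} := by
  intro x y hyx hx
  rcases hyx.lt_or_eq with hlt | rfl
  · exact hr y x k hlt hx
  · exact hx

theorem pre_gt_iff_two_plus_one_general (n : ℕ) (lt : Fin n → Fin n → Prop)
    (hnat : ∀ i j, lt i j → i < j)
    (hfact : ∀ i j k : Fin n, i < j → lt j k → lt i k)
    (i : Fin n) (h : (i : ℕ) + 1 < n) :
    (Nat.card {x : Fin n // lt x ⟨(i : ℕ) + 1, h⟩} <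
        Nat.card {x : Fin n // lt x i}) ↔
      ∃ ℓ : Fin n, lt ℓ i ∧ ¬ lt ℓ ⟨(i : ℕ) + 1, h⟩ ∧ ¬ lt ⟨(i : ℕ) + 1, h⟩ ℓ ∧
        ¬ lt i ⟨(i : ℕ) + 1, h⟩ ∧ ¬ lt ⟨(i : ℕ) + 1, h⟩ i := by
  set j : Fin n := ⟨(i : ℕ) + 1, h⟩
  have hPre (k x : Fin n) : lt x k ↔ (x : ℕ) < Nat.card {y // lt y k} :=
    Fin.mem_iff_lt_natCard_of_isLowerSet (isLowerSet_setOf_rel_of_lt_rel hfact k) x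
  have hcard_le : Nat.card {y // lt y i} ≤ i :=
    not_lt.1 fun hi => (hnat i i ((hPre i i).2 hi)).false
  have hj_not_lt (x : Fin n) (hx : (x : ℕ) ≤ i) : ¬ lt j x := fun hjx =>
    absurd (Fin.lt_def.1 (hnat j x hjx)) (by simp only [j]; omega)
  constructor
  · intro hcard_lt
    refine ⟨⟨Nat.card {y // lt y j}, by omega⟩, (hPre i _).2 hcard_lt,
      fun hb => ((hPre j _).1 hb).false, hj_not_lt _ (by simp only; omega), fun hij => ?_, hj_not_lt i le_rfl⟩
    have := (hPre j i).1 hij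
    omega
  · rintro ⟨ℓ, hℓi, hℓj, -, -, -⟩
    have := (hPre i ℓ).1 hℓi
    have := mt (hPre j ℓ).2 hℓj
    omega

/-- In a factorial poset on `[n]`, `|Pre(i)| > |Pre(i+1)|` holds iff there is an
induced (2+1) subposet: some `ℓ <_P i` with `ℓ ≮_P i+1`, the element `i+1` being
incomparable to both `ℓ` and `i`. -/
theorem pre_gt_iff_two_plus_one (n : ℕ) (lt : Fin n → Fin n → Prop)
    (hirr : ∀ i, ¬ lt i i)
    (htrans : ∀ i j k, lt i j → lt j k → lt i k)
    (hnat : ∀ i j, lt i j → i < j)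
    (hfact : ∀ i j k : Fin n, i < j → lt j k → lt i k)
    (i : Fin n) (h : (i : ℕ) + 1 < n) :
    (Nat.card {x : Fin n // lt x ⟨(i : ℕ) + 1, h⟩} <
        Nat.card {x : Fin n // lt x i}) ↔
      ∃ ℓ : Fin n, lt ℓ i ∧ ¬ lt ℓ ⟨(i : ℕ) + 1, h⟩ ∧ ¬ lt ⟨(i : ℕ) + 1, h⟩ ℓ ∧
        ¬ lt i ⟨(i : ℕ) + 1, h⟩ ∧ ¬ lt ⟨(i : ℕ) + 1, h⟩ i :=
  pre_gt_iff_two_plus_one_general n lt hnat hfact i h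
end

section
/- For any (2+2)-free poset P on n elements, there is exactly one labeling of P by [n] making it a factorial poset satisfying: for all i \in [n-1], |Pre(i)| \le |Pre(i+1)| or |Suc(i)| > |Suc(i+1)|. -/
/-- Incomparability in a partial order. -/
def IncompP {α : Type*} [PartialOrder α] (x y : α) : Prop :=
  ¬ x < y ∧ ¬ y < x ∧ x ≠ y

namespace CanonicalLabeling

open Function

set_option linter.unusedSectionVars false

variable {α : Type*} [PartialOrder α] [Fintype α]

/-- (2+2)-freeness. -/
def TTFree (α : Type*) [PartialOrder α] : Prop :=
  ¬ ∃ a b c d : α, a < b ∧ c < d ∧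
      IncompP a c ∧ IncompP a d ∧ IncompP b c ∧ IncompP b d

/-- Size of the strict down-set. -/
noncomputable def dlt (x : α) : ℕ := {a : α | a < x}.ncard

/-- Size of the strict up-set. -/
noncomputable def ult (x : α) : ℕ := {a : α | x < a}.ncard

/-- The "level" of `x` : size of the smallest strict down-set containing `x`
(`Fintype.card α` if `x` is maximal). -/
noncomputable def lam (x : α) : ℕ :=
  sInf (insert (Fintype.card α) (dlt '' {b : α | x < b}))

/-- The combined sorting weight. -/
noncomputable def mw (x : α) : ℕ := (Fintype.card α + 1) * lam x + dlt x

lemma natcard_dlt (x : α) : Nat.card {a : α // a < x} = dlt x :=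
  Nat.card_coe_set_eq _

lemma natcard_ult (x : α) : Nat.card {a : α // x < a} = ult x :=
  Nat.card_coe_set_eq _

lemma down_nested (hfree : TTFree α) (x y : α) :
    {a : α | a < x} ⊆ {a : α | a < y} ∨ {a : α | a < y} ⊆ {a : α | a < x} := by
  by_contra h
  push_neg at h
  obtain ⟨h1, h2⟩ := h
  rw [Set.not_subset] at h1 h2
  obtain ⟨a, hax, hay⟩ := h1
  obtain ⟨c, hcy, hcx⟩ := h2
  simp only [Set.mem_setOf_eq] at hax hay hcy hcx
  exact hfree ⟨a, x, c, y, hax, hcy,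
    ⟨fun h => hay (h.trans hcy), fun h => hcx (h.trans hax),
      fun h => hcx (h ▸ hax)⟩,
    ⟨hay, fun h => hcx ((hcy.trans h).trans hax),
      fun h => by subst h; exact hcx (hcy.trans hax)⟩,
    ⟨fun h => hay (hax.trans (h.trans hcy)), hcx,
      fun h => hay (hax.trans (h ▸ hcy))⟩,
    ⟨fun h => hay (hax.trans h), fun h => hcx (hcy.trans h),
      fun h => hay (h ▸ hax)⟩⟩

lemma up_nested (hfree : TTFree α) (x y : α) :
    {a : α | x < a} ⊆ {a : α | y < a} ∨ {a : α | y < a} ⊆ {a : α | x < a} := by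
  by_contra h
  push_neg at h
  obtain ⟨h1, h2⟩ := h
  rw [Set.not_subset] at h1 h2
  obtain ⟨a, hxa, hya⟩ := h1
  obtain ⟨c, hyc, hxc⟩ := h2
  simp only [Set.mem_setOf_eq] at hxa hya hyc hxc
  exact hfree ⟨x, a, y, c, hxa, hyc,
    ⟨fun h => hxc (h.trans hyc), fun h => hya (h.trans hxa),
      fun h => hxc (h ▸ hyc)⟩,
    ⟨hxc, fun h => hya ((hyc.trans h).trans hxa),
      fun h => by subst h; exact hya (hyc.trans hxa)⟩,
    ⟨fun h => hxc (hxa.trans (h.trans hyc)), hya,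
      fun h => hxc (hxa.trans (h ▸ hyc))⟩,
    ⟨fun h => hxc (hxa.trans h), fun h => hya (hyc.trans h),
      fun h => hxc (h ▸ hxa)⟩⟩

lemma subset_of_nested_card {s t : Set α} (hn : s ⊆ t ∨ t ⊆ s)
    (hc : s.ncard ≤ t.ncard) : s ⊆ t := by
  rcases hn with h | h
  · exact h
  · have := Set.eq_of_subset_of_ncard_le h hc (Set.toFinite _)
    rw [this]

lemma down_subset_of_le (hfree : TTFree α) {x y : α} (h : dlt x ≤ dlt y) :
    {a : α | a < x} ⊆ {a : α | a < y} :=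
  subset_of_nested_card (down_nested hfree x y) h

lemma up_subset_of_le (hfree : TTFree α) {x y : α} (h : ult x ≤ ult y) :
    {a : α | x < a} ⊆ {a : α | y < a} :=
  subset_of_nested_card (up_nested hfree x y) h

lemma dlt_lt_of_lt {x b : α} (h : x < b) : dlt x < dlt b := by
  have hsub : {a : α | a < x} ⊆ {a : α | a < b} := fun a ha => lt_trans ha h
  have hne : {a : α | a < x} ≠ {a : α | a < b} := by
    intro he
    have hx : x ∈ {a : α | a < b} := h
    rw [← he] at hx
    exact lt_irrefl x hx
  exact Set.ncard_lt_ncard (hsub.ssubset_of_ne hne) (Set.toFinite _)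

lemma dlt_lt_card (x : α) : dlt x < Fintype.card α := by
  have hsub : {a : α | a < x} ⊆ Set.univ := Set.subset_univ _
  have hne : {a : α | a < x} ≠ Set.univ := by
    intro he
    have hx : x ∈ {a : α | a < x} := by rw [he]; trivial
    exact lt_irrefl x hx
  have := Set.ncard_lt_ncard (hsub.ssubset_of_ne hne) (Set.toFinite _)
  rwa [Set.ncard_univ, Nat.card_eq_fintype_card] at this

lemma lam_le_of_lt {x b : α} (h : x < b) : lam x ≤ dlt b :=
  Nat.sInf_le (Set.mem_insert_of_mem _ ⟨b, h, rfl⟩)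

lemma lam_le_card (x : α) : lam x ≤ Fintype.card α :=
  Nat.sInf_le (Set.mem_insert _ _)

lemma lam_mem (x : α) :
    lam x ∈ insert (Fintype.card α) (dlt '' {b : α | x < b}) :=
  Nat.sInf_mem ⟨_, Set.mem_insert _ _⟩

lemma dlt_lt_lam (x : α) : dlt x < lam x := by
  rcases lam_mem x with h | ⟨b, hb, he⟩
  · rw [h]; exact dlt_lt_card x
  · rw [← he]; exact dlt_lt_of_lt hb

lemma lam_lt_exists {x : α} (h : lam x < Fintype.card α) :
    ∃ b, x < b ∧ dlt b = lam x := by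
  rcases lam_mem x with h2 | ⟨b, hb, he⟩
  · omega
  · exact ⟨b, hb, he⟩

lemma lt_iff_lam_le (hfree : TTFree α) {a b : α} : a < b ↔ lam a ≤ dlt b := by
  constructor
  · exact lam_le_of_lt
  · intro h
    have hlt : lam a < Fintype.card α := lt_of_le_of_lt h (dlt_lt_card b)
    obtain ⟨z, hz1, hz2⟩ := lam_lt_exists hlt
    have hsub : {c : α | c < z} ⊆ {c : α | c < b} :=
      down_subset_of_le hfree (by rw [hz2]; exact h)
    exact hsub hz1

lemma lam_anti (hfree : TTFree α) {x y : α} (h : ult x ≤ ult y) :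
    lam y ≤ lam x := by
  by_cases hx : lam x < Fintype.card α
  · obtain ⟨z, hz1, hz2⟩ := lam_lt_exists hx
    have hyz : y < z := up_subset_of_le hfree h hz1
    have := lam_le_of_lt hyz
    omega
  · have := lam_le_card y
    omega

lemma not_ult_lt_of_lam_eq (hfree : TTFree α) {x y : α} (h : lam x = lam y) :
    ¬ ult x < ult y := by
  intro hu
  have hsub : {a : α | x < a} ⊆ {a : α | y < a} := up_subset_of_le hfree hu.le
  have hne : {a : α | x < a} ≠ {a : α | y < a} := by
    intro he
    rw [ult, ult, he] at hu
    exact lt_irrefl _ hu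
  obtain ⟨d, hd1, hd2⟩ := Set.exists_of_ssubset (hsub.ssubset_of_ne hne)
  simp only [Set.mem_setOf_eq] at hd1 hd2
  have hly : lam y ≤ dlt d := lam_le_of_lt hd1
  by_cases hx : lam x < Fintype.card α
  · obtain ⟨z, hz1, hz2⟩ := lam_lt_exists hx
    have hzd : dlt z ≤ dlt d := by omega
    have hsub2 : {a : α | a < z} ⊆ {a : α | a < d} := down_subset_of_le hfree hzd
    exact hd2 (hsub2 hz1)
  · have := dlt_lt_card d
    omega

lemma ult_eq_of_lam_eq (hfree : TTFree α) {x y : α} (h : lam x = lam y) :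
    ult x = ult y :=
  le_antisymm (not_lt.mp (not_ult_lt_of_lam_eq hfree h.symm))
    (not_lt.mp (not_ult_lt_of_lam_eq hfree h))

/-! ### `Fin` counting lemmas -/

lemma card_le_seg {N : ℕ} (k : Fin N) :
    Nat.card {l : Fin N // l ≤ k} = (k : ℕ) + 1 := by
  have e : {l : Fin N // l ≤ k} ≃ Fin ((k : ℕ) + 1) :=
    { toFun := fun l => ⟨l.1.1, Nat.lt_succ_of_le l.2⟩
      invFun := fun j =>
        ⟨⟨j.1, lt_of_le_of_lt (Nat.le_of_lt_succ j.2) k.2⟩,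
          Nat.le_of_lt_succ j.2⟩
      left_inv := fun l => by ext; rfl
      right_inv := fun j => rfl }
  rw [Nat.card_congr e, Nat.card_eq_fintype_card, Fintype.card_fin]

lemma card_lt_seg {N : ℕ} (k : Fin N) :
    Nat.card {l : Fin N // l < k} = (k : ℕ) := by
  have e : {l : Fin N // l < k} ≃ Fin (k : ℕ) :=
    { toFun := fun l => ⟨l.1.1, l.2⟩
      invFun := fun j =>
        ⟨⟨j.1, lt_trans j.2 k.2⟩, j.2⟩
      left_inv := fun l => by ext; rfl
      right_inv := fun j => rfl }
  rw [Nat.card_congr e, Nat.card_eq_fintype_card, Fintype.card_fin]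

/-- A downward-closed predicate on `Fin N` is an initial segment. -/
lemma initseg {N : ℕ} (p : Fin N → Prop)
    (hp : ∀ j k : Fin N, j < k → p k → p j) (i : Fin N) :
    p i ↔ (i : ℕ) < Nat.card {x : Fin N // p x} := by
  constructor
  · intro hi
    have key : ∀ l : Fin N, l ≤ i → p l := by
      intro l hl
      rcases lt_or_eq_of_le hl with h | h
      · exact hp l i h hi
      · exact h ▸ hi
    have hinj : Injective
        (fun l : {l : Fin N // l ≤ i} => (⟨l.1, key l.1 l.2⟩ : {x : Fin N // p x})) := by
      intro a b hab
      exact Subtype.ext (Subtype.mk_eq_mk.mp hab)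
    have := Nat.card_le_card_of_injective _ hinj
    rw [card_le_seg] at this
    omega
  · intro hi
    by_contra hpi
    have key : ∀ x : Fin N, p x → x < i := by
      intro x hx
      rcases lt_trichotomy x i with h | h | h
      · exact h
      · exact absurd (h ▸ hx) hpi
      · exact absurd (hp i x h hx) hpi
    have hinj : Injective
        (fun x : {x : Fin N // p x} => (⟨x.1, key x.1 x.2⟩ : {l : Fin N // l < i})) := by
      intro a b hab
      exact Subtype.ext (Subtype.mk_eq_mk.mp hab)
    have := Nat.card_le_card_of_injective _ hinj
    rw [card_lt_seg] at this
    omega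

/-- Rank characterization for a sorted enumeration. -/
lemma rank {N : ℕ} (w : α → ℕ) (g : α ≃ Fin N)
    (hg : ∀ k l : Fin N, k ≤ l → w (g.symm k) ≤ w (g.symm l)) (k : Fin N) (s : ℕ) :
    w (g.symm k) ≤ s ↔ (k : ℕ) < Nat.card {a : α // w a ≤ s} := by
  constructor
  · intro h
    have hinj : Injective
        (fun l : {l : Fin N // l ≤ k} =>
          (⟨g.symm l.1, le_trans (hg l.1 k l.2) h⟩ : {a : α // w a ≤ s})) := by
      intro a b hab
      have h2 : g.symm a.1 = g.symm b.1 := congrArg Subtype.val hab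
      exact Subtype.ext (g.symm.injective h2)
    have := Nat.card_le_card_of_injective _ hinj
    rw [card_le_seg] at this
    omega
  · intro h
    by_contra hws
    push_neg at hws
    have key : ∀ a : α, w a ≤ s → g a < k := by
      intro a ha
      by_contra hk
      push_neg at hk
      have := hg k (g a) hk
      rw [g.symm_apply_apply] at this
      omega
    have hinj : Injective
        (fun a : {a : α // w a ≤ s} =>
          (⟨g a.1, key a.1 a.2⟩ : {l : Fin N // l < k})) := by
      intro a b hab
      have h2 : g a.1 = g b.1 := congrArg Subtype.val hab
      exact Subtype.ext (g.injective h2)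
    have := Nat.card_le_card_of_injective _ hinj
    rw [card_lt_seg] at this
    omega

lemma sort_unique {N : ℕ} (w : α → ℕ) (g f : α ≃ Fin N)
    (hg : ∀ k l : Fin N, k ≤ l → w (g.symm k) ≤ w (g.symm l))
    (hf : ∀ k l : Fin N, k ≤ l → w (f.symm k) ≤ w (f.symm l)) (k : Fin N) :
    w (g.symm k) = w (f.symm k) := by
  apply le_antisymm
  · exact (rank w g hg k _).mpr ((rank w f hf k _).mp le_rfl)
  · exact (rank w f hf k _).mpr ((rank w g hg k _).mp le_rfl)

lemma mono_of_succ {N : ℕ} (g : Fin N → ℕ)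
    (h : ∀ (k : ℕ) (hk : k + 1 < N), g ⟨k, Nat.lt_of_succ_lt hk⟩ ≤ g ⟨k + 1, hk⟩) :
    ∀ k l : Fin N, k ≤ l → g k ≤ g l := by
  have main : ∀ (l k : ℕ) (hk : k < N) (hl : l < N), k ≤ l → g ⟨k, hk⟩ ≤ g ⟨l, hl⟩ := by
    intro l
    induction l with
    | zero =>
      intro k hk hl hkl
      have : k = 0 := Nat.le_zero.mp hkl
      subst this
      exact le_refl _
    | succ m ih =>
      intro k hk hl hkl
      rcases Nat.lt_or_ge k (m + 1) with hlt | hge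
      · have hkm : k ≤ m := Nat.lt_succ_iff.mp hlt
        have hm : m < N := Nat.lt_of_succ_lt hl
        exact le_trans (ih k hk hm hkm) (h m hl)
      · have : k = m + 1 := le_antisymm hkl hge
        subst this
        exact le_refl _
  intro k l hkl
  exact main l.1 k.1 k.2 l.2 hkl


/-- Any relation satisfying the factorial axioms with isomorphism `f` is determined by
the down-set sizes, and `f` enumerates elements in nondecreasing order of weight. -/
lemma gen (hfree : TTFree α)
    (lt' : Fin (Fintype.card α) → Fin (Fintype.card α) → Prop)
    (h4 : ∀ i j k : Fin (Fintype.card α), i < j → lt' j k → lt' i k)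
    (f : α ≃ Fin (Fintype.card α))
    (hf : ∀ a b : α, a < b ↔ lt' (f a) (f b))
    (h6 : ∀ (i : Fin (Fintype.card α)) (h : (i : ℕ) + 1 < Fintype.card α),
      Nat.card {x : Fin (Fintype.card α) // lt' x i} ≤
        Nat.card {x : Fin (Fintype.card α) // lt' x ⟨(i : ℕ) + 1, h⟩} ∨
      Nat.card {x : Fin (Fintype.card α) // lt' ⟨(i : ℕ) + 1, h⟩ x} <
        Nat.card {x : Fin (Fintype.card α) // lt' i x}) :
    (∀ i k, lt' i k ↔ (i : ℕ) < dlt (f.symm k)) ∧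
    (∀ k l : Fin (Fintype.card α), k ≤ l → mw (f.symm k) ≤ mw (f.symm l)) := by
  have hcard : ∀ k, Nat.card {x // lt' x k} = dlt (f.symm k) := by
    intro k
    rw [← natcard_dlt (f.symm k)]
    apply Nat.card_congr
    apply Equiv.subtypeEquiv f.symm
    intro x
    have := hf (f.symm x) (f.symm k)
    simp only [Equiv.apply_symm_apply] at this
    exact this.symm
  have hucard : ∀ k, Nat.card {x // lt' k x} = ult (f.symm k) := by
    intro k
    rw [← natcard_ult (f.symm k)]
    apply Nat.card_congr
    apply Equiv.subtypeEquiv f.symm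
    intro x
    have := hf (f.symm k) (f.symm x)
    simp only [Equiv.apply_symm_apply] at this
    exact this.symm
  have hchar : ∀ i k, lt' i k ↔ (i : ℕ) < dlt (f.symm k) := by
    intro i k
    rw [← hcard k]
    exact initseg (fun x => lt' x k) (fun j j' hjj hj => h4 j j' k hjj hj) i
  have iso3 : ∀ (a b : α), a < b ↔ (f a : ℕ) < dlt b := by
    intro a b
    rw [hf a b, hchar (f a) (f b), Equiv.symm_apply_apply]
  have sorted : ∀ a a' : α, lam a < lam a' → f a < f a' := by
    intro a a' h
    have hlt : lam a < Fintype.card α := lt_of_lt_of_le h (lam_le_card a')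
    obtain ⟨b, hb, he⟩ := lam_lt_exists hlt
    have h1 : (f a : ℕ) < dlt b := (iso3 a b).mp hb
    have h2 : ¬ a' < b := by
      intro hc
      have := lam_le_of_lt hc
      omega
    have h3 : ¬ ((f a' : ℕ) < dlt b) := fun hc => h2 ((iso3 a' b).mpr hc)
    exact Fin.lt_def.mpr (by omega)
  have lam_mono : ∀ k l : Fin (Fintype.card α), k ≤ l →
      lam (f.symm k) ≤ lam (f.symm l) := by
    intro k l hkl
    by_contra hc
    push_neg at hc
    have := sorted _ _ hc
    simp only [Equiv.apply_symm_apply] at this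
    exact absurd hkl (not_le.mpr this)
  refine ⟨hchar, ?_⟩
  apply mono_of_succ
  intro k hk
  have hlxy : lam (f.symm ⟨k, Nat.lt_of_succ_lt hk⟩) ≤ lam (f.symm ⟨k + 1, hk⟩) :=
    lam_mono _ _ (by simp [Fin.le_def])
  rcases lt_or_eq_of_le hlxy with hl | hl
  · have hd := dlt_lt_card (f.symm ⟨k, Nat.lt_of_succ_lt hk⟩)
    have h2 : (Fintype.card α + 1) * (lam (f.symm ⟨k, Nat.lt_of_succ_lt hk⟩) + 1) ≤
        (Fintype.card α + 1) * lam (f.symm ⟨k + 1, hk⟩) := Nat.mul_le_mul_left _ hl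
    have h3 : (Fintype.card α + 1) * (lam (f.symm ⟨k, Nat.lt_of_succ_lt hk⟩) + 1) =
        (Fintype.card α + 1) * lam (f.symm ⟨k, Nat.lt_of_succ_lt hk⟩) +
          (Fintype.card α + 1) := by ring
    show (Fintype.card α + 1) * lam (f.symm ⟨k, Nat.lt_of_succ_lt hk⟩) +
        dlt (f.symm ⟨k, Nat.lt_of_succ_lt hk⟩) ≤
      (Fintype.card α + 1) * lam (f.symm ⟨k + 1, hk⟩) + dlt (f.symm ⟨k + 1, hk⟩)
    omega
  · have hu : ult (f.symm ⟨k, Nat.lt_of_succ_lt hk⟩) = ult (f.symm ⟨k + 1, hk⟩) :=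
      ult_eq_of_lam_eq hfree hl
    have h6' := h6 ⟨k, Nat.lt_of_succ_lt hk⟩ hk
    rw [hcard, hcard, hucard, hucard] at h6'
    have hyy : (f.symm ⟨((⟨k, Nat.lt_of_succ_lt hk⟩ : Fin (Fintype.card α)) : ℕ) + 1, hk⟩) =
        f.symm ⟨k + 1, hk⟩ := rfl
    rw [hyy] at h6'
    rcases h6' with h | h
    · show (Fintype.card α + 1) * lam (f.symm ⟨k, Nat.lt_of_succ_lt hk⟩) +
          dlt (f.symm ⟨k, Nat.lt_of_succ_lt hk⟩) ≤
        (Fintype.card α + 1) * lam (f.symm ⟨k + 1, hk⟩) + dlt (f.symm ⟨k + 1, hk⟩)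
      rw [hl]
      omega
    · omega

lemma mw_mod (a : α) : mw a % (Fintype.card α + 1) = dlt a := by
  show ((Fintype.card α + 1) * lam a + dlt a) % (Fintype.card α + 1) = dlt a
  rw [Nat.mul_add_mod]
  exact Nat.mod_eq_of_lt (by have := dlt_lt_card a; omega)

end CanonicalLabeling


open CanonicalLabeling

/-- For any (2+2)-free poset on `n` elements there is exactly one labeled poset on
`Fin n` isomorphic to it which is factorial and satisfies: for all `i ∈ [n-1]`,
`|Pre(i)| ≤ |Pre(i+1)|` or `|Suc(i)| > |Suc(i+1)|`. -/
theorem unique_canonical_labeling (n : ℕ) (α : Type*) [PartialOrder α] [Fintype α]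
    (hcard : Fintype.card α = n)
    (hfree : ¬ ∃ a b c d : α, a < b ∧ c < d ∧
      IncompP a c ∧ IncompP a d ∧ IncompP b c ∧ IncompP b d) :
    ∃! lt : Fin n → Fin n → Prop,
      (∀ i, ¬ lt i i) ∧
      (∀ i j k, lt i j → lt j k → lt i k) ∧
      (∀ i j, lt i j → i < j) ∧
      (∀ i j k : Fin n, i < j → lt j k → lt i k) ∧
      (∃ e : α ≃ Fin n, ∀ a b : α, a < b ↔ lt (e a) (e b)) ∧
      (∀ (i : Fin n) (h : (i : ℕ) + 1 < n),
        Nat.card {x : Fin n // lt x i} ≤ Nat.card {x : Fin n // lt x ⟨(i : ℕ) + 1, h⟩} ∨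
        Nat.card {x : Fin n // lt ⟨(i : ℕ) + 1, h⟩ x} < Nat.card {x : Fin n // lt i x}) := by
  subst hcard
  classical
  have hfree' : TTFree α := hfree
  -- injective weight incorporating an arbitrary tie-break
  set idx : α ≃ Fin (Fintype.card α) := Fintype.equivFin α with hidx
  set Mw : α → ℕ := fun a => Fintype.card α * mw a + (idx a : ℕ) with hMw
  have hMw_lt : ∀ a a' : α, mw a < mw a' → Mw a < Mw a' := by
    intro a a' h
    have h1 : (idx a : ℕ) < Fintype.card α := (idx a).2
    have h2 : Fintype.card α * (mw a + 1) ≤ Fintype.card α * mw a' :=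
      Nat.mul_le_mul_left _ h
    have h3 : Fintype.card α * (mw a + 1) = Fintype.card α * mw a + Fintype.card α := by
      ring
    show Fintype.card α * mw a + (idx a : ℕ) < Fintype.card α * mw a' + (idx a' : ℕ)
    omega
  have hMw_mono : ∀ a a' : α, Mw a ≤ Mw a' → mw a ≤ mw a' := by
    intro a a' h
    by_contra hc
    push_neg at hc
    exact absurd h (not_le.mpr (hMw_lt a' a hc))
  have hMw_inj : Function.Injective Mw := by
    intro a a' h
    have h1 : mw a = mw a' := le_antisymm (hMw_mono a a' h.le) (hMw_mono a' a h.ge)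
    have h2 : (idx a : ℕ) = (idx a' : ℕ) := by
      have h3 : Fintype.card α * mw a + (idx a : ℕ) =
          Fintype.card α * mw a' + (idx a' : ℕ) := h
      rw [h1] at h3
      omega
    exact idx.injective (Fin.ext h2)
  set s : Finset ℕ := Finset.univ.image Mw with hsdef
  have hs : s.card = Fintype.card α := by
    rw [hsdef, Finset.card_image_of_injective _ hMw_inj, Finset.card_univ]
  set o := s.orderIsoOfFin hs with ho
  set g : α → Fin (Fintype.card α) :=
    fun a => o.symm ⟨Mw a, Finset.mem_image_of_mem _ (Finset.mem_univ a)⟩ with hg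
  have hg_lt : ∀ a a' : α, g a < g a' ↔ Mw a < Mw a' := by
    intro a a'
    show o.symm _ < o.symm _ ↔ _
    rw [o.symm.lt_iff_lt]
    exact Subtype.mk_lt_mk
  have hg_inj : Function.Injective g := by
    intro a a' h
    have h2 := o.symm.injective h
    exact hMw_inj (Subtype.mk_eq_mk.mp h2)
  have hg_bij : Function.Bijective g :=
    (Fintype.bijective_iff_injective_and_card g).mpr ⟨hg_inj, by simp⟩
  set e : α ≃ Fin (Fintype.card α) := Equiv.ofBijective g hg_bij with he
  have he_lt : ∀ a a' : α, e a < e a' ↔ Mw a < Mw a' := hg_lt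
  have hmw_lam : ∀ a a' : α, lam a < lam a' → mw a < mw a' := by
    intro a a' h
    have hd := dlt_lt_card a
    have h2 : (Fintype.card α + 1) * (lam a + 1) ≤ (Fintype.card α + 1) * lam a' :=
      Nat.mul_le_mul_left _ h
    have h3 : (Fintype.card α + 1) * (lam a + 1) =
        (Fintype.card α + 1) * lam a + (Fintype.card α + 1) := by ring
    show (Fintype.card α + 1) * lam a + dlt a < (Fintype.card α + 1) * lam a' + dlt a'
    omega
  have hlam_mw : ∀ a a' : α, mw a ≤ mw a' → lam a ≤ lam a' := by
    intro a a' h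
    by_contra hc
    push_neg at hc
    exact absurd h (not_le.mpr (hmw_lam a' a hc))
  have hdlt_mw : ∀ a a' : α, mw a ≤ mw a' → lam a = lam a' → dlt a ≤ dlt a' := by
    intro a a' h hl
    have h2 : (Fintype.card α + 1) * lam a + dlt a ≤
        (Fintype.card α + 1) * lam a' + dlt a' := h
    rw [hl] at h2
    omega
  -- the canonical relation
  have hP3 : ∀ i j : Fin (Fintype.card α), e.symm i < e.symm j → i < j := by
    intro i j h
    have h1 : lam (e.symm i) ≤ dlt (e.symm j) := lam_le_of_lt h
    have h2 : dlt (e.symm j) < lam (e.symm j) := dlt_lt_lam _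
    have h3 : mw (e.symm i) < mw (e.symm j) := hmw_lam _ _ (by omega)
    have h4 := (he_lt _ _).mpr (hMw_lt _ _ h3)
    simpa using h4
  have hP4 : ∀ i j k : Fin (Fintype.card α), i < j → e.symm j < e.symm k →
      e.symm i < e.symm k := by
    intro i j k hij hjk
    have h1 : Mw (e.symm i) < Mw (e.symm j) := by
      have h2 := he_lt (e.symm i) (e.symm j)
      simp only [Equiv.apply_symm_apply] at h2
      exact h2.mp hij
    have h2 : lam (e.symm i) ≤ lam (e.symm j) := hlam_mw _ _ (hMw_mono _ _ h1.le)
    have h3 : lam (e.symm j) ≤ dlt (e.symm k) := lam_le_of_lt hjk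
    exact (lt_iff_lam_le hfree').mpr (by omega)
  have hP5 : ∀ a b : α, a < b ↔ e.symm (e a) < e.symm (e b) := by
    intro a b
    simp
  have hdcard : ∀ k : Fin (Fintype.card α),
      Nat.card {x : Fin (Fintype.card α) // e.symm x < e.symm k} = dlt (e.symm k) := by
    intro k
    rw [← natcard_dlt (e.symm k)]
    exact Nat.card_congr (Equiv.subtypeEquiv e.symm (fun _ => Iff.rfl))
  have hucard : ∀ k : Fin (Fintype.card α),
      Nat.card {x : Fin (Fintype.card α) // e.symm k < e.symm x} = ult (e.symm k) := by
    intro k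
    rw [← natcard_ult (e.symm k)]
    exact Nat.card_congr (Equiv.subtypeEquiv e.symm (fun _ => Iff.rfl))
  have hP6 : ∀ (i : Fin (Fintype.card α)) (h : (i : ℕ) + 1 < Fintype.card α),
      Nat.card {x : Fin (Fintype.card α) // e.symm x < e.symm i} ≤
        Nat.card {x : Fin (Fintype.card α) // e.symm x < e.symm ⟨(i : ℕ) + 1, h⟩} ∨
      Nat.card {x : Fin (Fintype.card α) // e.symm ⟨(i : ℕ) + 1, h⟩ < e.symm x} <
        Nat.card {x : Fin (Fintype.card α) // e.symm i < e.symm x} := by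
    intro i h
    rw [hdcard, hdcard, hucard, hucard]
    have hii : i < (⟨(i : ℕ) + 1, h⟩ : Fin (Fintype.card α)) := by
      simp [Fin.lt_def]
    have hexy : e (e.symm i) < e (e.symm ⟨(i : ℕ) + 1, h⟩) := by
      simpa using hii
    have hmww : mw (e.symm i) ≤ mw (e.symm ⟨(i : ℕ) + 1, h⟩) :=
      hMw_mono _ _ ((he_lt _ _).mp hexy).le
    have hlxy : lam (e.symm i) ≤ lam (e.symm ⟨(i : ℕ) + 1, h⟩) := hlam_mw _ _ hmww
    rcases lt_or_eq_of_le hlxy with hl | hl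
    · right
      by_contra hc
      push_neg at hc
      exact absurd (lam_anti hfree' hc) (by omega)
    · left
      exact hdlt_mw _ _ hmww hl
  refine ⟨fun i k => e.symm i < e.symm k,
    ⟨fun i => lt_irrefl _, fun i j k h1 h2 => lt_trans h1 h2, hP3, hP4, ⟨e, hP5⟩, hP6⟩, ?_⟩
  rintro lt' ⟨hq1, hq2, hq3, hq4, ⟨f, hq5⟩, hq6⟩
  obtain ⟨hchar', hmono'⟩ := gen hfree' lt' hq4 f hq5 hq6
  obtain ⟨hchar, hmono⟩ :=
    gen hfree' (fun i k => e.symm i < e.symm k) hP4 e hP5 hP6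
  funext i k
  have hdq : dlt (f.symm k) = dlt (e.symm k) := by
    have hm := sort_unique mw f e hmono' hmono k
    rw [← mw_mod (f.symm k), ← mw_mod (e.symm k), hm]
  exact propext ((hchar' i k).trans (by rw [hdq]; exact (hchar i k).symm))
end

section
/- The generating polynomial of factorial posets on [n] by the number of incomparable pairs (i,j) with i < j (integers) and i not <_P j equals the q-factorial [n]_q!. -/
open Finset Polynomial

/-- The number of incomparable pairs of a factorial poset: pairs `(i,j)` with
`i < j` as integers and `i ≮_P j`. -/
noncomputable def incompPairs {n : ℕ} (P : FactorialPoset n) : ℕ :=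
  Nat.card {p : Fin n × Fin n // p.1 < p.2 ∧ ¬ P.lt p.1 p.2}

/-- The size of the down-set of `j`. -/
noncomputable def mval {n : ℕ} (P : FactorialPoset n) (j : Fin n) : ℕ :=
  Nat.card {i : Fin n // P.lt i j}

/-- The number of elements of `Fin n` with value less than `t ≤ n` is `t`. -/
lemma natCard_val_lt {n t : ℕ} (ht : t ≤ n) :
    Nat.card {i : Fin n // i.1 < t} = t := by
  have e : {i : Fin n // i.1 < t} ≃ Fin t :=
    { toFun := fun x => ⟨x.1.1, x.2⟩
      invFun := fun y => ⟨⟨y.1, lt_of_lt_of_le y.isLt ht⟩, y.isLt⟩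
      left_inv := fun x => by apply Subtype.ext; apply Fin.ext; rfl
      right_inv := fun y => by apply Fin.ext; rfl }
  rw [Nat.card_congr e]
  simp

lemma mval_le {n : ℕ} (P : FactorialPoset n) (j : Fin n) : mval P j ≤ j.1 := by
  have h := Nat.card_le_card_of_injective
    (α := {i : Fin n // P.lt i j}) (β := {i : Fin n // i.1 < j.1})
    (fun x => ⟨x.1, Fin.lt_def.1 (P.natural _ _ x.2)⟩)
    (fun a b hab => Subtype.ext (by simpa using hab))
  rw [natCard_val_lt (le_of_lt j.isLt)] at h
  exact h

lemma lt_iff_mval {n : ℕ} (P : FactorialPoset n) (i j : Fin n) :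
    P.lt i j ↔ i.1 < mval P j := by
  constructor
  · intro h
    have h2 := Nat.card_le_card_of_injective
      (α := {x : Fin n // x.1 < i.1 + 1}) (β := {x : Fin n // P.lt x j})
      (fun x => ⟨x.1, by
        have hx : x.1.1 < i.1 + 1 := x.2
        rcases Nat.lt_or_ge x.1.1 i.1 with hlt | hge
        · exact P.factorial x.1 i j (Fin.lt_def.2 hlt) h
        · have hxe : x.1 = i := Fin.ext (by omega)
          rw [hxe]; exact h⟩)
      (fun a b hab => Subtype.ext (by simpa using hab))
    rw [natCard_val_lt i.isLt] at h2
    exact h2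
  · intro h
    by_contra hne
    have h2 := Nat.card_le_card_of_injective
      (α := {x : Fin n // P.lt x j}) (β := {x : Fin n // x.1 < i.1})
      (fun x => ⟨x.1, by
        have hxj := x.2
        by_contra hxi
        push_neg at hxi
        rcases lt_or_eq_of_le hxi with hlt | heq
        · exact hne (P.factorial i x.1 j (Fin.lt_def.2 hlt) hxj)
        · exact hne (by rw [(Fin.ext heq : i = x.1)]; exact hxj)⟩)
      (fun a b hab => Subtype.ext (by simpa using hab))
    rw [natCard_val_lt (le_of_lt i.isLt)] at h2
    have : i.1 < mval P j := h
    have : mval P j ≤ i.1 := h2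
    omega

/-- A factorial poset is determined by the sizes of its down-sets. -/
noncomputable def posetEquiv (n : ℕ) : FactorialPoset n ≃ (∀ j : Fin n, Fin (j.1 + 1)) where
  toFun P := fun j => ⟨mval P j, Nat.lt_succ_of_le (mval_le P j)⟩
  invFun g :=
    { lt := fun i j => i.1 < (g j).1
      irrefl := fun i h => by have := (g i).isLt; omega
      trans := fun i j k h1 h2 => by have := (g j).isLt; omega
      natural := fun i j h => by
        have := (g j).isLt
        exact Fin.lt_def.2 (by omega)
      factorial := fun i j k hij h => by
        have := Fin.lt_def.1 hij
        omega }
  left_inv P := by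
    obtain ⟨lt, h1, h2, h3, h4⟩ := P
    simp only [FactorialPoset.mk.injEq]
    funext i j
    exact propext (lt_iff_mval ⟨lt, h1, h2, h3, h4⟩ i j).symm
  right_inv g := by
    funext j
    apply Fin.ext
    show mval _ j = (g j).1
    have hle : (g j).1 ≤ n := le_of_lt (lt_of_le_of_lt (Nat.lt_succ_iff.1 (g j).isLt) j.isLt)
    exact natCard_val_lt hle

lemma natCard_sigma {n : ℕ} (α : Fin n → Type*) [∀ i, Finite (α i)] :
    Nat.card (Σ i, α i) = ∑ i, Nat.card (α i) := by
  letI : ∀ i, Fintype (α i) := fun i => Fintype.ofFinite _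
  simp [Nat.card_eq_fintype_card, Fintype.card_sigma]

lemma natCard_ico {n a b : ℕ} (hb : b ≤ n) :
    Nat.card {i : Fin n // a ≤ i.1 ∧ i.1 < b} = b - a := by
  have e : {i : Fin n // a ≤ i.1 ∧ i.1 < b} ≃ Fin (b - a) :=
    { toFun := fun x => ⟨x.1.1 - a, by have := x.2; omega⟩
      invFun := fun x => ⟨⟨x.1 + a, by have := x.isLt; omega⟩,
        by
          have := x.isLt
          exact ⟨Nat.le_add_left _ _, show x.1 + a < b by omega⟩⟩
      left_inv := fun x => by
        apply Subtype.ext; apply Fin.ext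
        show x.1.1 - a + a = x.1.1
        have := x.2; omega
      right_inv := fun x => by
        apply Fin.ext
        show x.1 + a - a = x.1
        omega }
  rw [Nat.card_congr e]
  simp

lemma incomp_eq {n : ℕ} (P : FactorialPoset n) :
    incompPairs P = ∑ j : Fin n, (j.1 - mval P j) := by
  have e : {p : Fin n × Fin n // p.1 < p.2 ∧ ¬ P.lt p.1 p.2} ≃
      Σ j : Fin n, {i : Fin n // mval P j ≤ i.1 ∧ i.1 < j.1} :=
    { toFun := fun x => ⟨x.1.2, ⟨x.1.1, by
        have h1 := x.2.1
        have h2 := x.2.2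
        rw [lt_iff_mval] at h2
        exact ⟨by omega, Fin.lt_def.1 h1⟩⟩⟩
      invFun := fun y => ⟨(y.2.1, y.1), by
        constructor
        · exact Fin.lt_def.2 y.2.2.2
        · show ¬ P.lt y.2.1 y.1
          rw [lt_iff_mval]
          have := y.2.2.1
          omega⟩
      left_inv := fun x => rfl
      right_inv := fun y => rfl }
  rw [incompPairs, Nat.card_congr e, natCard_sigma]
  exact Finset.sum_congr rfl fun j _ => natCard_ico (le_of_lt j.isLt)

lemma sum_attach_range {n : ℕ} (f : ∀ a ∈ Finset.range n, ℕ) :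
    ∑ x ∈ (Finset.range n).attach, f x.1 x.2 =
      ∑ j : Fin n, f j.1 (Finset.mem_range.2 j.isLt) := by
  refine Finset.sum_nbij' (fun x => (⟨x.1, Finset.mem_range.1 x.2⟩ : Fin n))
    (fun j => ⟨j.1, Finset.mem_range.2 j.isLt⟩) ?_ ?_ ?_ ?_ ?_
  · intro a _; exact Finset.mem_univ _
  · intro a _; exact Finset.mem_attach _ _
  · intro a _; rfl
  · intro a _; rfl
  · intro a _; rfl

/-- Forward map from a `Finset.pi` element to a tuple. -/
def fwdMap {n : ℕ} (p : ∀ a ∈ Finset.range n, ℕ) : ∀ j : Fin n, Fin (j.1 + 1) :=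
  fun j => ⟨j.1 - p j.1 (Finset.mem_range.2 j.isLt), Nat.lt_succ_of_le (Nat.sub_le _ _)⟩

/-- Backward map from a tuple to a `Finset.pi` element. -/
def bwdMap {n : ℕ} (g : ∀ j : Fin n, Fin (j.1 + 1)) : ∀ a ∈ Finset.range n, ℕ :=
  fun a ha => a - (g ⟨a, Finset.mem_range.1 ha⟩).1

/-- The generating polynomial of factorial posets on `[n]` by the number of
incomparable pairs is the q-factorial `[n]_q!`: its `k`-th coefficient counts the
factorial posets with exactly `k` incomparable pairs. -/
theorem factorialPoset_incomp_gen (n : ℕ) (k : ℕ) :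
    ((∏ i ∈ Finset.range n, ∑ j ∈ Finset.range (i + 1),
        (Polynomial.X : Polynomial ℤ) ^ j).coeff k) =
      Nat.card {P : FactorialPoset n // incompPairs P = k} := by
  -- Right-hand side: transport along the equivalence with tuples.
  have hR : Nat.card {P : FactorialPoset n // incompPairs P = k} =
      Nat.card {g : ∀ j : Fin n, Fin (j.1 + 1) // ∑ j : Fin n, (j.1 - (g j).1) = k} := by
    refine Nat.card_congr (Equiv.subtypeEquiv (posetEquiv n) fun P => ?_)
    rw [incomp_eq]
    rfl
  -- Left-hand side: expand the product of geometric sums.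
  rw [Finset.prod_sum]
  simp only [Finset.prod_pow_eq_pow_sum, Polynomial.finset_sum_coeff,
    Polynomial.coeff_X_pow]
  rw [Finset.sum_boole]
  rw [hR]
  -- Express the Nat.card as a Finset card.
  have hcard : Nat.card {g : ∀ j : Fin n, Fin (j.1 + 1) // ∑ j : Fin n, (j.1 - (g j).1) = k} =
      (Finset.univ.filter
        (fun g : ∀ j : Fin n, Fin (j.1 + 1) => ∑ j : Fin n, (j.1 - (g j).1) = k)).card := by
    rw [Nat.card_eq_fintype_card, Fintype.card_subtype]
  rw [hcard]
  clear hcard hR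
  congr 1
  -- Bijection between the two filtered sets.
  refine Finset.card_bij' (fun p _ => fwdMap p) (fun g _ => bwdMap g) ?_ ?_ ?_ ?_
  · -- forward map lands in target
    intro p hp
    rw [Finset.mem_filter] at hp ⊢
    refine ⟨Finset.mem_univ _, ?_⟩
    have hmem := Finset.mem_pi.1 hp.1
    have hk := hp.2
    show ∑ j : Fin n, (j.1 - (fwdMap p j).1) = k
    rw [hk, sum_attach_range (fun a ha => p a ha)]
    refine Finset.sum_congr rfl fun j _ => ?_
    have hpj : p j.1 (Finset.mem_range.2 j.isLt) ∈ Finset.range (j.1 + 1) :=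
      hmem j.1 (Finset.mem_range.2 j.isLt)
    rw [Finset.mem_range] at hpj
    show j.1 - (j.1 - p j.1 (Finset.mem_range.2 j.isLt)) = p j.1 (Finset.mem_range.2 j.isLt)
    omega
  · -- backward map lands in source
    intro g hg
    rw [Finset.mem_filter] at hg ⊢
    constructor
    · rw [Finset.mem_pi]
      intro a ha
      rw [Finset.mem_range]
      show a - (g ⟨a, Finset.mem_range.1 ha⟩).1 < a + 1
      omega
    · show k = ∑ x ∈ (Finset.range n).attach, bwdMap g x.1 x.2
      rw [sum_attach_range (fun a ha => bwdMap g a ha)]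
      rw [← hg.2]
      exact Finset.sum_congr rfl fun j _ => rfl
  · -- left inverse
    intro p hp
    rw [Finset.mem_filter] at hp
    have hmem := Finset.mem_pi.1 hp.1
    funext a ha
    have hpa : p a ha ∈ Finset.range (a + 1) := hmem a ha
    rw [Finset.mem_range] at hpa
    show a - (fwdMap p ⟨a, Finset.mem_range.1 ha⟩).1 = p a ha
    show a - (a - p a (Finset.mem_range.2 (Finset.mem_range.1 ha))) = p a ha
    have : p a (Finset.mem_range.2 (Finset.mem_range.1 ha)) = p a ha := rfl
    omega
  · -- right inverse
    intro g _
    funext j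
    apply Fin.ext
    have := (g j).isLt
    show j.1 - bwdMap g j.1 (Finset.mem_range.2 j.isLt) = (g j).1
    show j.1 - (j.1 - (g ⟨j.1, Finset.mem_range.1 (Finset.mem_range.2 j.isLt)⟩).1) = (g j).1
    have h2 : (g ⟨j.1, Finset.mem_range.1 (Finset.mem_range.2 j.isLt)⟩).1 = (g j).1 := rfl
    omega
end

section
/- The number of perfect matchings of [2n] with no alignments is n!. -/
/-- A perfect matching of `[2n]`, encoded as a fixed-point-free involution. -/
def IsMatching {m : ℕ} (f : Equiv.Perm (Fin m)) : Prop :=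
  ∀ i, f (f i) = i ∧ f i ≠ i

/-- No alignments: there are no two arcs `(i, f i)`, `(j, f j)` with
`i < f i < j < f j`. -/
def NoAlignment {m : ℕ} (f : Equiv.Perm (Fin m)) : Prop :=
  ¬ ∃ i j : Fin m, i < f i ∧ j < f j ∧ f i < j

/-!
If an arc `a < f a` lay inside the left half `[0, n)`, then `f` could not map the right half into
the left one (both halves have `n` elements), so some arc `b < f b` would lie inside the right
half, and `a < f a < b < f b` would be an alignment. Hence matchings without alignments are exactly
the involutions exchanging the two halves, and these correspond to the permutations `σ` of `[n]`
via the arcs `(i, n + σ i)`.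
-/

open Equiv Function Finset Sum

lemma Finset.mapsTo_of_mapsTo_compl {α : Type*} [Fintype α] [DecidableEq α] {g : α → α}
    (hg : Injective g) {s : Finset α} (hs : #sᶜ ≤ #s) (h : Set.MapsTo g s ↑sᶜ) :
    Set.MapsTo g ↑sᶜ s := by
  simpa using (surjOn_of_injOn_of_card_le g h hg.injOn hs).mapsTo_compl hg

section Alignment

variable {m : ℕ} {f : Perm (Fin m)}

lemma IsMatching.exists_arc (hf : IsMatching f) {p : Fin m → Prop} {i : Fin m} (hi : p i)
    (hfi : p (f i)) : ∃ a, a < f a ∧ p a ∧ p (f a) := by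
  rcases (hf i).2.lt_or_gt with h | h
  · exact ⟨f i, by rwa [(hf i).1], hfi, by rwa [(hf i).1]⟩
  · exact ⟨i, h, hi, hfi⟩

lemma IsMatching.mapsTo_compl_of_noAlignment (hf : IsMatching f) (hna : NoAlignment f)
    {s : Finset (Fin m)} (hlt : ∀ x ∈ s, ∀ y ∉ s, x < y) (hs : #s = #sᶜ) :
    Set.MapsTo f s ↑sᶜ := by
  intro x hx
  by_contra hfx
  simp only [coe_compl, Set.mem_compl_iff, mem_coe, not_not] at hfx
  obtain ⟨a, ha, -, has⟩ := hf.exists_arc (p := (· ∈ s)) hx hfx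
  obtain ⟨y, hy, hfy⟩ : ∃ y ∉ s, f y ∉ s := by
    by_contra! h
    have := mapsTo_of_mapsTo_compl f.injective (s := sᶜ) (by simp [hs])
      (fun y hy => by simpa using h y (by simpa using hy))
      (by simpa using hx)
    simp_all
  obtain ⟨b, hb, hbs, -⟩ := hf.exists_arc (p := (· ∉ s)) hy hfy
  exact hna ⟨a, b, ha, hb, hlt _ has _ hbs⟩

end Alignment

section Halves

variable {n : ℕ} {f : Perm (Fin (2 * n))}

def SwapsHalves (f : Perm (Fin (2 * n))) : Prop :=
  ∀ i, (f i : ℕ) < n ↔ ¬ (i : ℕ) < n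

lemma IsMatching.swapsHalves_of_noAlignment (hf : IsMatching f) (hna : NoAlignment f) :
    SwapsHalves f := by
  set s : Finset (Fin (2 * n)) := {i | (i : ℕ) < n}
  have hcard : #sᶜ = #s := by rw [card_compl]; simp [s, Fin.card_filter_val_lt]; omega
  have hs : Set.MapsTo f s ↑sᶜ :=
    hf.mapsTo_compl_of_noAlignment hna (fun x hx y hy => by simp [s] at hx hy; omega) hcard.symm
  have hsc := mapsTo_of_mapsTo_compl f.injective hcard.le hs
  intro i
  by_cases hi : (i : ℕ) < n
  · simpa [s, hi] using hs (by simpa [s] using hi)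
  · simpa [s, hi] using hsc (by simpa [s] using hi)

lemma SwapsHalves.isMatching (hs : SwapsHalves f) (hinv : Involutive f) : IsMatching f := by
  refine fun i => ⟨hinv i, fun h => ?_⟩
  have := hs i
  rw [h] at this
  omega

lemma SwapsHalves.noAlignment (hs : SwapsHalves f) : NoAlignment f := by
  have harc (a) (ha : a < f a) : (a : ℕ) < n ∧ ¬ (f a : ℕ) < n := by
    have := hs a
    rw [Fin.lt_def] at ha
    omega
  rintro ⟨a, b, ha, hb, hab⟩
  have := harc a ha
  have := harc b hb
  rw [Fin.lt_def] at hab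
  omega

lemma isMatching_and_noAlignment_iff :
    IsMatching f ∧ NoAlignment f ↔ Involutive f ∧ SwapsHalves f :=
  ⟨fun ⟨hf, hna⟩ => ⟨fun i => (hf i).1, hf.swapsHalves_of_noAlignment hna⟩,
    fun ⟨hinv, hs⟩ => ⟨hs.isMatching hinv, hs.noAlignment⟩⟩

end Halves

namespace Equiv.Perm

variable {α : Type*}

def SwapsSummands (g : Perm (α ⊕ α)) : Prop :=
  ∀ x, (g x).isLeft ↔ ¬ x.isLeft

def bipartiteInvolution (σ : Perm α) : Perm (α ⊕ α) :=
  (sumCongr σ σ⁻¹).trans (sumComm α α)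

@[simp]
lemma bipartiteInvolution_inl (σ : Perm α) (a : α) :
    σ.bipartiteInvolution (inl a) = inr (σ a) := rfl

@[simp]
lemma bipartiteInvolution_inr (σ : Perm α) (a : α) :
    σ.bipartiteInvolution (inr a) = inl (σ⁻¹ a) := rfl

lemma involutive_bipartiteInvolution (σ : Perm α) : Involutive σ.bipartiteInvolution := by
  rintro (a | a) <;> simp

lemma swapsSummands_bipartiteInvolution (σ : Perm α) :
    SwapsSummands σ.bipartiteInvolution := by
  rintro (a | a) <;> simp

def involutionSwapsSummandsEquiv :
    {g : Perm (α ⊕ α) // Involutive g ∧ SwapsSummands g} ≃ Perm α where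
  toFun g :=
    { toFun a := (g.1 (inl a)).getRight (by simpa using g.2.2 (inl a))
      invFun a := (g.1 (inr a)).getLeft (by simpa using g.2.2 (inr a))
      left_inv a := by simp [g.2.1 _]
      right_inv a := by simp [g.2.1 _] }
  invFun σ := ⟨σ.bipartiteInvolution, σ.involutive_bipartiteInvolution,
    σ.swapsSummands_bipartiteInvolution⟩
  left_inv g := by
    ext1; ext1 x
    rcases x with a | a <;> simp
  right_inv σ := by
    ext a
    simp

end Equiv.Perm

lemma Equiv.involutive_permCongr_iff {α β : Type*} (e : α ≃ β) (f : Perm α) :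
    Involutive (e.permCongr f) ↔ Involutive f := by
  simp [Involutive, e.forall_congr_left, ← e.eq_symm_apply]

def finTwoMulEquivSum (n : ℕ) : Fin (2 * n) ≃ Fin n ⊕ Fin n :=
  (finCongr (two_mul n)).trans finSumFinEquiv.symm

lemma isLeft_finTwoMulEquivSum {n : ℕ} (i : Fin (2 * n)) :
    (finTwoMulEquivSum n i).isLeft ↔ (i : ℕ) < n := by
  obtain ⟨j, rfl⟩ := (finCongr (two_mul n)).symm.surjective i
  induction j using Fin.addCases <;> simp [finTwoMulEquivSum, -Fin.natAdd_eq_addNat]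

lemma swapsSummands_permCongr_finTwoMulEquivSum_iff {n : ℕ} (f : Perm (Fin (2 * n))) :
    Perm.SwapsSummands ((finTwoMulEquivSum n).permCongr f) ↔ SwapsHalves f := by
  rw [Perm.SwapsSummands, ← (finTwoMulEquivSum n).forall_congr_right]
  simp only [permCongr_apply, symm_apply_apply, isLeft_finTwoMulEquivSum, SwapsHalves]

/-- The number of perfect matchings of `[2n]` with no alignments is `n!`. -/
theorem card_noAlignment_matchings (n : ℕ) :
    Nat.card {f : Equiv.Perm (Fin (2 * n)) // IsMatching f ∧ NoAlignment f} =
      n.factorial := by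
  let e := (finTwoMulEquivSum n).permCongr
  have hiff (f : Perm (Fin (2 * n))) :
      IsMatching f ∧ NoAlignment f ↔ Involutive (e f) ∧ Perm.SwapsSummands (e f) := by
    rw [isMatching_and_noAlignment_iff, Equiv.involutive_permCongr_iff,
      swapsSummands_permCongr_finTwoMulEquivSum_iff]
  rw [Nat.card_congr ((e.subtypeEquiv hiff).trans Perm.involutionSwapsSummandsEquiv),
    Nat.card_perm, Nat.card_fin]
end

section
/- The generating polynomial counting perfect matchings of [2n] with no alignments by the number of nestings equals the q-factorial [n]_q!. -/
open Finset Polynomial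

/-- The number of nestings: pairs of arcs `(i, f i)`, `(j, f j)` with
`i < j < f j < f i`. -/
noncomputable def nestCount {m : ℕ} (f : Equiv.Perm (Fin m)) : ℕ :=
  Nat.card {p : Fin m × Fin m // p.1 < p.2 ∧ p.2 < f p.2 ∧ f p.2 < f p.1}

def invCount {n : ℕ} (σ : Equiv.Perm (Fin n)) : ℕ :=
  (Finset.univ.filter fun p : Fin n × Fin n => p.1 < p.2 ∧ σ p.2 < σ p.1).card


def insPerm {n : ℕ} (τ : Equiv.Perm (Fin n)) (q : Fin (n + 1)) : Equiv.Perm (Fin (n + 1)) :=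
  (finSuccEquiv' q).trans ((Equiv.optionCongr τ).trans (finSuccEquiv' (Fin.last n)).symm)

lemma insPerm_at {n : ℕ} (τ : Equiv.Perm (Fin n)) (q : Fin (n + 1)) :
    insPerm τ q q = Fin.last n := by
  simp [insPerm, finSuccEquiv'_at]

lemma insPerm_succAbove {n : ℕ} (τ : Equiv.Perm (Fin n)) (q : Fin (n + 1)) (j : Fin n) :
    insPerm τ q (q.succAbove j) = (τ j).castSucc := by
  simp [insPerm, finSuccEquiv'_succAbove, finSuccEquiv'_symm_some, Fin.succAbove_last]

lemma insPerm_surj {n : ℕ} (σ : Equiv.Perm (Fin (n + 1))) :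
    ∃ τ : Equiv.Perm (Fin n), insPerm τ (σ.symm (Fin.last n)) = σ := by
  set q := σ.symm (Fin.last n) with hq
  have hσq : σ q = Fin.last n := σ.apply_symm_apply _
  set e : Option (Fin n) ≃ Option (Fin n) :=
    (finSuccEquiv' q).symm.trans (σ.trans (finSuccEquiv' (Fin.last n))) with he
  refine ⟨e.removeNone, ?_⟩
  ext i
  rcases eq_or_ne i q with rfl | hi
  · rw [insPerm_at, hσq]
  · obtain ⟨j, rfl⟩ := Fin.exists_succAbove_eq hi
    have hne : σ (q.succAbove j) ≠ Fin.last n := by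
      intro h
      exact (Fin.succAbove_ne q j) (σ.injective (h.trans hσq.symm))
    obtain ⟨z, hz⟩ := Fin.exists_succAbove_eq hne
    have hez : e (some j) = some z := by
      simp only [he, Equiv.trans_apply, finSuccEquiv'_symm_some, ← hz,
        finSuccEquiv'_succAbove]
    have hrz : e.removeNone j = z := by
      have := Equiv.removeNone_some e ⟨z, hez⟩
      rw [hez] at this
      exact Option.some_injective _ this
    rw [insPerm_succAbove, hrz, ← Fin.succAbove_last, hz]

lemma invCount_insPerm {n : ℕ} (τ : Equiv.Perm (Fin n)) (q : Fin (n + 1)) :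
    invCount (insPerm τ q) = invCount τ + (n - q.val) := by
  classical
  set σ := insPerm τ q with hσ
  have hsplit := Finset.card_filter_add_card_filter_not
    (s := Finset.univ.filter fun p : Fin (n+1) × Fin (n+1) => p.1 < p.2 ∧ σ p.2 < σ p.1)
    (p := fun p => p.1 = q)
  rw [invCount, ← hsplit, Finset.filter_filter, Finset.filter_filter]
  have h1 : (Finset.univ.filter fun p : Fin (n+1) × Fin (n+1) =>
      (p.1 < p.2 ∧ σ p.2 < σ p.1) ∧ p.1 = q).card = n - q.val := by
    have hc : n - q.val = (Finset.Ioi q).card := by rw [Fin.card_Ioi]; omega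
    rw [hc]
    apply Finset.card_bij (fun p _ => p.2) ?_ ?_ ?_
    · rintro ⟨a, b⟩ hab
      simp only [Finset.mem_filter, Finset.mem_univ, true_and] at hab
      obtain ⟨⟨h1, h2⟩, rfl⟩ := hab
      exact Finset.mem_Ioi.mpr h1
    · rintro ⟨a, b⟩ ha ⟨a', b'⟩ ha' h
      simp only [Finset.mem_filter, Finset.mem_univ, true_and] at ha ha'
      simp only at h
      exact Prod.ext (ha.2.trans ha'.2.symm) h
    · intro b hb
      rw [Finset.mem_Ioi] at hb
      have hbq : b ≠ q := (ne_of_gt hb)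
      obtain ⟨j, rfl⟩ := Fin.exists_succAbove_eq hbq
      refine ⟨(q, q.succAbove j), ?_, rfl⟩
      simp only [Finset.mem_filter, Finset.mem_univ, true_and]
      refine ⟨⟨hb, ?_⟩, trivial⟩
      rw [insPerm_succAbove, insPerm_at]
      exact Fin.castSucc_lt_last _
  have h2 : (Finset.univ.filter fun p : Fin (n+1) × Fin (n+1) =>
      (p.1 < p.2 ∧ σ p.2 < σ p.1) ∧ ¬p.1 = q).card = invCount τ := by
    rw [invCount]
    symm
    apply Finset.card_bij (fun p _ => (q.succAbove p.1, q.succAbove p.2)) ?_ ?_ ?_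
    · rintro ⟨a, b⟩ hab
      simp only [Finset.mem_filter, Finset.mem_univ, true_and] at hab ⊢
      refine ⟨⟨?_, ?_⟩, Fin.succAbove_ne q a⟩
      · exact Fin.succAbove_lt_succAbove_iff.mpr hab.1
      · rw [insPerm_succAbove, insPerm_succAbove]
        exact Fin.castSucc_lt_castSucc_iff.mpr hab.2
    · rintro ⟨a, b⟩ ha ⟨a', b'⟩ ha' h
      simp only [Prod.mk.injEq] at h
      exact Prod.ext (Fin.succAbove_right_injective h.1) (Fin.succAbove_right_injective h.2)
    · rintro ⟨a, b⟩ hab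
      simp only [Finset.mem_filter, Finset.mem_univ, true_and] at hab
      obtain ⟨⟨h1, h2⟩, h3⟩ := hab
      obtain ⟨j1, rfl⟩ := Fin.exists_succAbove_eq h3
      have hbq : b ≠ q := by
        rintro rfl
        rw [insPerm_at] at h2
        exact absurd h2 (Fin.le_last _).not_gt
      obtain ⟨j2, rfl⟩ := Fin.exists_succAbove_eq hbq
      refine ⟨(j1, j2), ?_, rfl⟩
      simp only [Finset.mem_filter, Finset.mem_univ, true_and]
      rw [insPerm_succAbove, insPerm_succAbove] at h2
      exact ⟨Fin.succAbove_lt_succAbove_iff.mp h1, Fin.castSucc_lt_castSucc_iff.mp h2⟩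
  rw [h1, h2, Nat.add_comm]

lemma insPerm_symm_last {n : ℕ} (τ : Equiv.Perm (Fin n)) (q : Fin (n + 1)) :
    (insPerm τ q).symm (Fin.last n) = q := by
  rw [Equiv.symm_apply_eq, insPerm_at]

lemma insPerm_inj {n : ℕ} {τ τ' : Equiv.Perm (Fin n)} {q : Fin (n + 1)}
    (h : insPerm τ q = insPerm τ' q) : τ = τ' := by
  ext j
  have := congrArg (fun e : Equiv.Perm (Fin (n+1)) => e (q.succAbove j)) h
  simp only [insPerm_succAbove] at this
  exact congrArg Fin.val (Fin.castSucc_injective _ this)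

lemma card_inv_succ (n k : ℕ) :
    (Finset.univ.filter fun σ : Equiv.Perm (Fin (n+1)) => invCount σ = k).card =
      ∑ j ∈ Finset.range (n+1),
        (Finset.univ.filter fun τ : Equiv.Perm (Fin n) => invCount τ + j = k).card := by
  classical
  rw [Finset.card_eq_sum_card_fiberwise
    (f := fun σ : Equiv.Perm (Fin (n+1)) => (σ.symm (Fin.last n)).rev) (t := Finset.univ)
    (fun _ _ => Finset.mem_univ _)]
  rw [← Fin.sum_univ_eq_sum_range
    (fun j => (Finset.univ.filter fun τ : Equiv.Perm (Fin n) => invCount τ + j = k).card) (n+1)]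
  apply Finset.sum_congr rfl
  intro p _
  rw [Finset.filter_filter]
  have hrev : (p.rev : ℕ) = n - p.val := by
    rw [Fin.val_rev]; omega
  symm
  apply Finset.card_bij (fun τ _ => insPerm τ p.rev) ?_ ?_ ?_
  · intro τ hτ
    simp only [Finset.mem_filter, Finset.mem_univ, true_and] at hτ ⊢
    constructor
    · rw [invCount_insPerm, hrev]
      have := p.isLt
      have h2 : n - (n - p.val) = p.val := by omega
      rw [h2]; exact hτ
    · rw [insPerm_symm_last, Fin.rev_rev]
  · intro τ _ τ' _ h
    exact insPerm_inj h
  · intro σ hσ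
    simp only [Finset.mem_filter, Finset.mem_univ, true_and] at hσ
    obtain ⟨hk, hp⟩ := hσ
    have hq : σ.symm (Fin.last n) = p.rev := by
      rw [← hp, Fin.rev_rev]
    obtain ⟨τ, hτ⟩ := insPerm_surj σ
    rw [hq] at hτ
    refine ⟨τ, ?_, hτ⟩
    simp only [Finset.mem_filter, Finset.mem_univ, true_and]
    rw [← hτ, invCount_insPerm, hrev] at hk
    have := p.isLt
    have h2 : n - (n - p.val) = p.val := by omega
    rwa [h2] at hk

lemma coeff_prod_eq (n : ℕ) : ∀ k : ℕ,
    ((∏ i ∈ Finset.range n, ∑ j ∈ Finset.range (i + 1),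
        (Polynomial.X : Polynomial ℤ) ^ j).coeff k) =
      ((Finset.univ.filter fun σ : Equiv.Perm (Fin n) => invCount σ = k).card : ℤ) := by
  classical
  induction n with
  | zero =>
    intro k
    have huniq : ∀ σ : Equiv.Perm (Fin 0), invCount σ = 0 := by
      intro σ
      simp [invCount]
    rcases eq_or_ne k 0 with rfl | hk
    · rw [Finset.range_zero, Finset.prod_empty, Polynomial.coeff_one_zero]
      rw [Finset.filter_true_of_mem (fun σ _ => huniq σ)]
      simp
    · rw [Finset.range_zero, Finset.prod_empty, Polynomial.coeff_one, if_neg (by omega)]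
      rw [Finset.filter_false_of_mem (fun σ _ => by rw [huniq σ]; omega)]
      simp
  | succ n ih =>
    intro k
    rw [Finset.prod_range_succ, Finset.mul_sum, Polynomial.finset_sum_coeff]
    simp_rw [Polynomial.coeff_mul_X_pow']
    rw [card_inv_succ]
    push_cast
    apply Finset.sum_congr rfl
    intro j hj
    by_cases hjk : j ≤ k
    · rw [if_pos hjk, ih]
      congr 2
      apply Finset.filter_congr
      intro τ _
      omega
    · rw [if_neg hjk]
      rw [Finset.filter_false_of_mem (fun τ _ => by omega)]
      simp

def toSum (n : ℕ) : Fin (2*n) ≃ (Fin n ⊕ Fin n) :=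
  (finCongr (two_mul n)).trans finSumFinEquiv.symm

lemma toSum_symm_inl {n : ℕ} (a : Fin n) : ((toSum n).symm (Sum.inl a)).val = a.val := by
  simp [toSum]

lemma toSum_symm_inr {n : ℕ} (a : Fin n) : ((toSum n).symm (Sum.inr a)).val = n + a.val := by
  simp [toSum]; omega

lemma toSum_apply_lt {n : ℕ} {i : Fin (2*n)} (h : i.val < n) :
    toSum n i = Sum.inl ⟨i.val, h⟩ := by
  rcases h' : toSum n i with a | a
  · have hv : i.val = a.val := by
      have : i = (toSum n).symm (Sum.inl a) := by rw [← h', Equiv.symm_apply_apply]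
      rw [this, toSum_symm_inl]
    congr 1
    exact Fin.ext hv.symm
  · exfalso
    have hv : i.val = n + a.val := by
      have : i = (toSum n).symm (Sum.inr a) := by rw [← h', Equiv.symm_apply_apply]
      rw [this, toSum_symm_inr]
    omega

lemma toSum_apply_ge {n : ℕ} {i : Fin (2*n)} (h : n ≤ i.val) :
    toSum n i = Sum.inr ⟨i.val - n, by have := i.isLt; omega⟩ := by
  rcases h' : toSum n i with a | a
  · exfalso
    have hv : i.val = a.val := by
      have : i = (toSum n).symm (Sum.inl a) := by rw [← h', Equiv.symm_apply_apply]
      rw [this, toSum_symm_inl]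
    have := a.isLt; omega
  · have hv : i.val = n + a.val := by
      have : i = (toSum n).symm (Sum.inr a) := by rw [← h', Equiv.symm_apply_apply]
      rw [this, toSum_symm_inr]
    congr 1
    exact Fin.ext (by simp only [Fin.val_mk]; omega)

def matchPerm {n : ℕ} (σ : Equiv.Perm (Fin n)) : Equiv.Perm (Fin (2*n)) :=
  ((toSum n).trans ((Equiv.sumCongr (σ : Fin n ≃ Fin n) σ.symm).trans
    (Equiv.sumComm (Fin n) (Fin n)))).trans (toSum n).symm

lemma matchPerm_apply_lt {n : ℕ} (σ : Equiv.Perm (Fin n)) {i : Fin (2*n)} (h : i.val < n) :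
    (matchPerm σ i).val = n + (σ ⟨i.val, h⟩).val := by
  simp only [matchPerm, Equiv.trans_apply, toSum_apply_lt h, Equiv.sumCongr_apply,
    Sum.map_inl, Equiv.sumComm_apply, Sum.swap_inl, toSum_symm_inr]

lemma matchPerm_apply_ge {n : ℕ} (σ : Equiv.Perm (Fin n)) {i : Fin (2*n)} (h : n ≤ i.val) :
    (matchPerm σ i).val = (σ.symm ⟨i.val - n, by have := i.isLt; omega⟩).val := by
  simp only [matchPerm, Equiv.trans_apply, toSum_apply_ge h, Equiv.sumCongr_apply,
    Sum.map_inr, Equiv.sumComm_apply, Sum.swap_inr, toSum_symm_inl]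

lemma isMatching_matchPerm {n : ℕ} (σ : Equiv.Perm (Fin n)) : IsMatching (matchPerm σ) := by
  intro i
  constructor
  · apply Fin.ext
    rcases lt_or_ge i.val n with h | h
    · have h1 := matchPerm_apply_lt σ h
      have h2 : n ≤ (matchPerm σ i).val := by omega
      rw [matchPerm_apply_ge σ h2]
      have : (⟨(matchPerm σ i).val - n, by have := (matchPerm σ i).isLt; omega⟩ : Fin n)
          = σ ⟨i.val, h⟩ := Fin.ext (by simp only [Fin.val_mk]; omega)
      rw [this, Equiv.symm_apply_apply]
    · have hlt : i.val - n < n := by have := i.isLt; omega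
      have h1 := matchPerm_apply_ge σ h
      have h2 : (matchPerm σ i).val < n := by
        rw [h1]; exact (σ.symm _).isLt
      rw [matchPerm_apply_lt σ h2]
      have : (⟨(matchPerm σ i).val, h2⟩ : Fin n) = σ.symm ⟨i.val - n, hlt⟩ :=
        Fin.ext (by rw [h1])
      rw [this, Equiv.apply_symm_apply]
      simp only [Fin.val_mk]; omega
  · intro hfix
    rcases lt_or_ge i.val n with h | h
    · have := matchPerm_apply_lt σ h
      rw [hfix] at this; omega
    · have := matchPerm_apply_ge σ h
      rw [hfix] at this
      have := (σ.symm (⟨i.val - n, by have := i.isLt; omega⟩ : Fin n)).isLt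
      omega

lemma noAlignment_matchPerm {n : ℕ} (σ : Equiv.Perm (Fin n)) : NoAlignment (matchPerm σ) := by
  rintro ⟨i, j, hi, hj, hij⟩
  have hi' : i.val < n := by
    by_contra h
    push_neg at h
    have := matchPerm_apply_ge σ h
    have := (σ.symm (⟨i.val - n, by have := i.isLt; omega⟩ : Fin n)).isLt
    have : (matchPerm σ i).val < i.val := by omega
    exact absurd (Fin.lt_def.mp hi) (by omega)
  have hj' : j.val < n := by
    by_contra h
    push_neg at h
    have := matchPerm_apply_ge σ h
    have := (σ.symm (⟨j.val - n, by have := j.isLt; omega⟩ : Fin n)).isLt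
    have : (matchPerm σ j).val < j.val := by omega
    exact absurd (Fin.lt_def.mp hj) (by omega)
  have := matchPerm_apply_lt σ hi'
  have h2 := Fin.lt_def.mp hij
  omega

lemma matchPerm_castLE {n : ℕ} (σ : Equiv.Perm (Fin n)) (a : Fin n) :
    (matchPerm σ (Fin.castLE (by omega : n ≤ 2*n) a)).val = n + (σ a).val := by
  have h : (Fin.castLE (by omega : n ≤ 2*n) a).val < n := a.isLt
  rw [matchPerm_apply_lt σ h]
  have : (⟨(Fin.castLE (by omega : n ≤ 2*n) a).val, h⟩ : Fin n) = a := Fin.ext (by simp)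
  rw [this]

lemma matchPerm_injective {n : ℕ} : Function.Injective (matchPerm (n := n)) := by
  intro σ σ' h
  apply Equiv.ext
  intro j
  have h1 := matchPerm_castLE σ j
  have h2 := matchPerm_castLE σ' j
  rw [h] at h1
  exact Fin.ext (by omega)

lemma nestCount_eq_filter {m : ℕ} (f : Equiv.Perm (Fin m)) :
    nestCount f = (Finset.univ.filter fun p : Fin m × Fin m =>
      p.1 < p.2 ∧ p.2 < f p.2 ∧ f p.2 < f p.1).card := by
  classical
  rw [nestCount, Nat.card_eq_fintype_card, Fintype.card_subtype]

lemma nestCount_matchPerm {n : ℕ} (σ : Equiv.Perm (Fin n)) :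
    nestCount (matchPerm σ) = invCount σ := by
  classical
  rw [nestCount_eq_filter, invCount]
  symm
  have hn : n ≤ 2*n := by omega
  apply Finset.card_bij (fun p _ => (Fin.castLE hn p.1, Fin.castLE hn p.2)) ?_ ?_ ?_
  · rintro ⟨a, b⟩ hab
    simp only [Finset.mem_filter, Finset.mem_univ, true_and] at hab ⊢
    obtain ⟨h1, h2⟩ := hab
    have ka := matchPerm_castLE σ a
    have kb := matchPerm_castLE σ b
    refine ⟨?_, ?_, ?_⟩
    · exact Fin.lt_def.mpr (by simpa using Fin.lt_def.mp h1)
    · rw [Fin.lt_def, kb]; simp only [Fin.coe_castLE]; omega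
    · rw [Fin.lt_def, ka, kb]
      have := Fin.lt_def.mp h2; omega
  · rintro ⟨a, b⟩ _ ⟨a', b'⟩ _ h
    simp only [Prod.mk.injEq] at h
    exact Prod.ext (Fin.castLE_injective hn h.1) (Fin.castLE_injective hn h.2)
  · rintro ⟨a, b⟩ hab
    simp only [Finset.mem_filter, Finset.mem_univ, true_and] at hab
    obtain ⟨h1, h2, h3⟩ := hab
    have hb : b.val < n := by
      by_contra hble
      push_neg at hble
      have := matchPerm_apply_ge σ hble
      have := (σ.symm (⟨b.val - n, by have := b.isLt; omega⟩ : Fin n)).isLt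
      have := Fin.lt_def.mp h2
      omega
    have ha : a.val < n := by have := Fin.lt_def.mp h1; omega
    refine ⟨(⟨a.val, ha⟩, ⟨b.val, hb⟩), ?_, ?_⟩
    · simp only [Finset.mem_filter, Finset.mem_univ, true_and]
      constructor
      · exact Fin.lt_def.mpr (by simpa using Fin.lt_def.mp h1)
      · have ka := matchPerm_castLE σ ⟨a.val, ha⟩
        have kb := matchPerm_castLE σ ⟨b.val, hb⟩
        have hca : Fin.castLE hn (⟨a.val, ha⟩ : Fin n) = a := Fin.ext (by simp)
        have hcb : Fin.castLE hn (⟨b.val, hb⟩ : Fin n) = b := Fin.ext (by simp)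
        rw [hca] at ka; rw [hcb] at kb
        have := Fin.lt_def.mp h3
        rw [Fin.lt_def]
        omega
    · exact Prod.ext (Fin.ext (by simp)) (Fin.ext (by simp))

lemma opener_iff {n : ℕ} {f : Equiv.Perm (Fin (2*n))} (hm : IsMatching f)
    (ha : NoAlignment f) (i : Fin (2*n)) : i.val < n ↔ i < f i := by
  classical
  set A := Finset.univ.filter (fun j : Fin (2*n) => j < f j) with hA
  have hmem : ∀ j : Fin (2*n), j ∈ A ↔ j < f j := by
    intro j; simp [hA]
  have hnotmem : ∀ j, j ∉ A ↔ f j < j := by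
    intro j
    rw [hmem, not_lt]
    exact ⟨fun h => lt_of_le_of_ne h (hm j).2, le_of_lt⟩
  have horder : ∀ a ∈ A, ∀ b, b ∉ A → a < b := by
    intro a haA b hbA
    by_contra hba
    push_neg at hba
    have hba' : b < a := lt_of_le_of_ne hba (fun h => hbA (h ▸ haA))
    apply ha
    refine ⟨f b, a, ?_, (hmem a).mp haA, ?_⟩
    · rw [(hm b).1]; exact (hnotmem b).mp hbA
    · rw [(hm b).1]; exact hba'
  have hcompl : Aᶜ = A.image f := by
    ext j
    simp only [Finset.mem_compl, Finset.mem_image]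
    constructor
    · intro hj
      refine ⟨f j, ?_, (hm j).1⟩
      rw [hmem, (hm j).1]
      exact (hnotmem j).mp hj
    · rintro ⟨a, haA, rfl⟩
      rw [hnotmem, (hm a).1]
      exact (hmem a).mp haA
  have hAcard : A.card = n := by
    have h1 : Aᶜ.card = A.card := by
      rw [hcompl]; exact Finset.card_image_of_injective _ f.injective
    have h2 := Finset.card_compl A
    have h3 : Fintype.card (Fin (2*n)) = 2*n := Fintype.card_fin _
    have h4 : A.card ≤ 2*n := (Finset.card_le_univ A).trans_eq (by simp)
    omega
  constructor
  · intro h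
    by_contra hiA'
    have hiA : i ∉ A := by rw [hmem]; exact hiA'
    have hsub : A ⊆ Finset.Iio i := fun a haA => Finset.mem_Iio.mpr (horder a haA i hiA)
    have := Finset.card_le_card hsub
    rw [hAcard, Fin.card_Iio] at this
    omega
  · intro h
    by_contra hge
    push_neg at hge
    have hiA : i ∈ A := (hmem i).mpr h
    have hsub : Aᶜ ⊆ Finset.Ioi i :=
      fun b hb => Finset.mem_Ioi.mpr (horder i hiA b (Finset.mem_compl.mp hb))
    have hlt := Finset.card_le_card hsub
    rw [Fin.card_Ioi] at hlt
    have hc : Aᶜ.card = n := by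
      have h2 := Finset.card_compl A
      have h3 : Fintype.card (Fin (2*n)) = 2*n := Fintype.card_fin _
      omega
    have := i.isLt
    omega

lemma matchPerm_surj {n : ℕ} (f : Equiv.Perm (Fin (2*n))) (hm : IsMatching f)
    (ha : NoAlignment f) : ∃ σ : Equiv.Perm (Fin n), matchPerm σ = f := by
  classical
  have hn : n ≤ 2*n := by omega
  have hval : ∀ j : Fin n, n ≤ (f (Fin.castLE hn j)).val := by
    intro j
    have hopen : (Fin.castLE hn j) < f (Fin.castLE hn j) :=
      (opener_iff hm ha _).mp (by simpa using j.isLt)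
    by_contra hlt
    push_neg at hlt
    have hcl : f (Fin.castLE hn j) < f (f (Fin.castLE hn j)) :=
      (opener_iff hm ha _).mp hlt
    rw [(hm _).1] at hcl
    exact absurd hopen hcl.asymm
  let g : Fin n → Fin n := fun j =>
    ⟨(f (Fin.castLE hn j)).val - n, by have := (f (Fin.castLE hn j)).isLt; have := hval j; omega⟩
  have hginj : Function.Injective g := by
    intro j j' h
    have h1 := hval j
    have h2 := hval j'
    have hv : (f (Fin.castLE hn j)).val = (f (Fin.castLE hn j')).val := by
      have := congrArg Fin.val h
      simp only [g, Fin.val_mk] at this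
      omega
    have := f.injective (Fin.ext hv)
    exact Fin.castLE_injective hn this
  let σ : Equiv.Perm (Fin n) := Equiv.ofBijective g ((Finite.injective_iff_bijective).mp hginj)
  have hσ : ∀ j : Fin n, σ j = g j := fun j => rfl
  have hlow : ∀ i : Fin (2*n), i.val < n → matchPerm σ i = f i := by
    intro i hi
    have hi' : i = Fin.castLE hn ⟨i.val, hi⟩ := Fin.ext (by simp)
    apply Fin.ext
    rw [hi', matchPerm_castLE, hσ]
    simp only [g, Fin.val_mk]
    have := hval ⟨i.val, hi⟩
    omega
  refine ⟨σ, ?_⟩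
  apply Equiv.ext
  intro i
  rcases lt_or_ge i.val n with h | h
  · exact hlow i h
  · have hfi : (f i).val < n := by
      have hnotop : ¬ i < f i := by
        intro hc
        exact absurd ((opener_iff hm ha i).mpr hc) (by omega)
      have hficl : f i < f (f i) := by
        rw [(hm i).1]
        rcases lt_or_ge (f i) i with h' | h'
        · exact h'
        · exact absurd (lt_of_le_of_ne h' (Ne.symm (hm i).2)) hnotop
      exact (opener_iff hm ha (f i)).mpr hficl
    have h1 : matchPerm σ (f i) = f (f i) := hlow (f i) hfi
    rw [(hm i).1] at h1
    have h2 := (isMatching_matchPerm σ (f i)).1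
    rw [h1] at h2
    exact h2

lemma nat_card_match (n k : ℕ) :
    Nat.card {f : Equiv.Perm (Fin (2*n)) //
        IsMatching f ∧ NoAlignment f ∧ nestCount f = k} =
      (Finset.univ.filter fun σ : Equiv.Perm (Fin n) => invCount σ = k).card := by
  classical
  rw [Nat.card_eq_fintype_card, Fintype.card_subtype]
  symm
  apply Finset.card_bij (fun σ _ => matchPerm σ) ?_ ?_ ?_
  · intro σ hσ
    simp only [Finset.mem_filter, Finset.mem_univ, true_and] at hσ ⊢
    exact ⟨isMatching_matchPerm σ, noAlignment_matchPerm σ, by rw [nestCount_matchPerm, hσ]⟩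
  · intro σ _ σ' _ h
    exact matchPerm_injective h
  · intro f hf
    simp only [Finset.mem_filter, Finset.mem_univ, true_and] at hf
    obtain ⟨hm, ha, hk⟩ := hf
    obtain ⟨σ, rfl⟩ := matchPerm_surj f hm ha
    refine ⟨σ, ?_, rfl⟩
    simp only [Finset.mem_filter, Finset.mem_univ, true_and]
    rw [← nestCount_matchPerm σ]
    exact hk

/-- The generating polynomial of zero-alignment perfect matchings of `[2n]` by the
number of nestings is the q-factorial `[n]_q!`. -/
theorem noAlignment_nesting_gen (n k : ℕ) :
    ((∏ i ∈ Finset.range n, ∑ j ∈ Finset.range (i + 1),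
        (Polynomial.X : Polynomial ℤ) ^ j).coeff k) =
      Nat.card {f : Equiv.Perm (Fin (2 * n)) //
        IsMatching f ∧ NoAlignment f ∧ nestCount f = k} := by
  rw [coeff_prod_eq n k, nat_card_match n k]
end
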